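/- arXiv:0906.1559 — 2 statements merged into one kernel-verified Lean document; each statement's English description precedes it below -/
import Mathlib

section
/- There is a bijection between the set of ℓ-core partitions with largest part equal to k and the set of (ℓ-1)-core partitions with largest part at most k. -/
/-- The hook length of the box `(a, b)` (0-indexed row `a`, column `b`)
of the Young diagram `μ`: the number of boxes to the right in its row,
plus the number of boxes below in its column, plus one. -/
def hookLen (μ : YoungDiagram) (a b : ℕ) : ℕ :=
  μ.rowLen a + μ.colLen b - a - b - 1

/-- A partition (Young diagram) is an `ℓ`-core when no box has hook length
divisible by `ℓ`. -/
def IsCore (ℓ : ℕ) (μ : YoungDiagram) : Prop :=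
  ∀ a b : ℕ, (a, b) ∈ μ → ¬ ℓ ∣ hookLen μ a b

/-!
Encode a partition `μ` by its beta-set, the set of first-column hook lengths. Its gaps below the
hook length `h` of row `a` are exactly the numbers `h - (hook length)` for the boxes of row `a`,
so `μ` is an `L`-core iff its beta-set is closed under `h ↦ h - L`.

For `L = d + 1` such a set is an abacus: runner `i < d` carries the positions `≡ i + 1`
(mod `d + 1`), a closed set fills an initial segment of each runner, and the core is encoded by the
bead counts `n : Fin d → ℕ`, with largest part `max_i (i + 1 + (d + 1) n_i) - ∑ n - d`.

An `(e + 1)`-core `m` with largest part `≤ k` becomes an `(e + 2)`-core with largest part `k` by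
inserting one runner: write `k + ∑ m + e = P + (e + 1) v` with `P ≤ e` and put `v` beads on a new
runner at position `P`. Its first free position `k + ∑ m + e + 1 + v` is then the strict maximum,
which makes the largest part exactly `k`; conversely, deleting the runner where the maximum is
attained inverts the construction.
-/

open Finset

lemma Fin.add_sub_le_of_strictMono {n : ℕ} {f : Fin n → ℕ} (hf : StrictMono f) {i j : Fin n}
    (hij : i ≤ j) : f i + (j - i : ℕ) ≤ f j := by
  have hsub : (Icc i j).image f ⊆ Icc (f i) (f j) := by
    simp only [subset_iff, mem_image, mem_Icc]
    rintro _ ⟨x, ⟨hix, hxj⟩, rfl⟩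
    exact ⟨hf.monotone hix, hf.monotone hxj⟩
  have := card_le_card hsub
  rw [card_image_of_injective _ hf.injective, Fin.card_Icc, Nat.card_Icc] at this
  have : (i : ℕ) ≤ j := hij
  omega

lemma Fin.val_succAbove {n : ℕ} (p : Fin (n + 1)) (i : Fin n) :
    (p.succAbove i : ℕ) = if (i : ℕ) < p then (i : ℕ) else (i : ℕ) + 1 := by
  split_ifs with h
  · rw [Fin.succAbove_of_castSucc_lt _ _ h, Fin.val_castSucc]
  · rw [Fin.succAbove_of_le_castSucc _ _ (not_lt.1 h), Fin.val_succ]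

lemma Finset.eq_range_card_of_forall_le_mem {S : Finset ℕ} (hS : ∀ x ∈ S, ∀ y ≤ x, y ∈ S) :
    S = range S.card := by
  refine eq_of_subset_of_card_le (fun x hx => mem_range.2 ?_) (by simp)
  simpa using card_le_card (s := range (x + 1)) fun y hy =>
    hS x hx y (Nat.lt_succ_iff.1 (mem_range.1 hy))

def SubClosed (L : ℕ) (B : Finset ℕ) : Prop := ∀ h ∈ B, L ≤ h → h - L ∈ B

lemma SubClosed.sub_mul_mem {L : ℕ} {B : Finset ℕ} (hB : SubClosed L B) {h : ℕ} (hh : h ∈ B) :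
    ∀ c, c * L ≤ h → h - c * L ∈ B
  | 0, _ => by simpa using hh
  | c + 1, hc => by
    have := hB _ (hB.sub_mul_mem hh c (by nlinarith)) (by rw [add_mul] at hc; omega)
    rwa [Nat.sub_sub, ← Nat.succ_mul] at this

lemma SubClosed.not_dvd {L : ℕ} {B : Finset ℕ} (hB : SubClosed L B) (h0 : 0 ∉ B) {x : ℕ}
    (hx : x ∈ B) : ¬ L ∣ x := by
  rintro ⟨c, rfl⟩
  exact h0 (by simpa [mul_comm] using hB.sub_mul_mem hx c (by rw [mul_comm]))

namespace YoungDiagram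

variable (μ : YoungDiagram)

def betaSet : Finset ℕ := (range (μ.colLen 0)).image fun a => hookLen μ a 0

def betaGap (b : ℕ) : ℕ := b + (μ.colLen 0 - μ.colLen b)

variable {μ}

lemma rowLen_pos_iff {a : ℕ} : 0 < μ.rowLen a ↔ a < μ.colLen 0 := by
  rw [← mem_iff_lt_rowLen, mem_iff_lt_colLen]

lemma rowLen_eq_zero {a : ℕ} (ha : μ.colLen 0 ≤ a) : μ.rowLen a = 0 := by
  by_contra h
  exact absurd (rowLen_pos_iff.1 (Nat.pos_of_ne_zero h)) (by omega)

lemma hookLen_zero_strictAntiOn : StrictAntiOn (hookLen μ · 0) (Set.Iio (μ.colLen 0)) := by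
  intro a _ a' ha' h
  have ha' : a' < μ.colLen 0 := ha'
  have := μ.rowLen_anti a a' h.le
  have := rowLen_pos_iff.2 ha'
  simp only [hookLen]
  omega

lemma mem_betaSet {h : ℕ} : h ∈ μ.betaSet ↔ ∃ a < μ.colLen 0, hookLen μ a 0 = h := by
  simp [betaSet]

lemma zero_notMem_betaSet : 0 ∉ μ.betaSet := by
  intro hB
  obtain ⟨a, ha, h⟩ := mem_betaSet.1 hB
  have := rowLen_pos_iff.2 ha
  simp only [hookLen] at h
  omega

lemma card_betaSet : μ.betaSet.card = μ.colLen 0 := by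
  rw [betaSet, card_image_of_injOn, card_range]
  exact hookLen_zero_strictAntiOn.injOn.mono (by simp)

lemma hookLen_add_betaGap {a b : ℕ} (hab : (a, b) ∈ μ) :
    hookLen μ a b + μ.betaGap b = hookLen μ a 0 := by
  have := mem_iff_lt_rowLen.1 hab
  have := mem_iff_lt_colLen.1 hab
  have := μ.colLen_anti 0 b b.zero_le
  simp only [hookLen, betaGap]
  omega

lemma hookLen_pos {a b : ℕ} (hab : (a, b) ∈ μ) : 0 < hookLen μ a b := by
  have := mem_iff_lt_rowLen.1 hab
  have := mem_iff_lt_colLen.1 hab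
  simp only [hookLen]
  omega

lemma betaGap_notMem_betaSet (b : ℕ) : μ.betaGap b ∉ μ.betaSet := by
  intro hB
  obtain ⟨a, ha, h⟩ := mem_betaSet.1 hB
  have := μ.colLen_anti 0 b b.zero_le
  by_cases hab : (a, b) ∈ μ
  · have := hookLen_pos hab
    have := hookLen_add_betaGap hab
    omega
  · rw [mem_iff_lt_rowLen, not_lt] at hab
    have := mt mem_iff_lt_colLen.2 (mt mem_iff_lt_rowLen.1 hab.not_gt)
    simp only [hookLen, betaGap] at h
    omega

lemma betaGap_strictMono : StrictMono μ.betaGap := by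
  refine strictMono_nat_of_lt_succ fun b => ?_
  have := μ.colLen_anti b (b + 1) b.le_succ
  have := μ.colLen_anti 0 b b.zero_le
  simp only [betaGap]
  omega

lemma exists_hookLen_add_eq {a t : ℕ} (ha : a < μ.colLen 0) (ht : t < hookLen μ a 0)
    (htB : t ∉ μ.betaSet) : ∃ b, (a, b) ∈ μ ∧ hookLen μ a b + t = hookLen μ a 0 := by
  set T := (range (hookLen μ a 0)).filter (· ∉ μ.betaSet)
  -- the gaps `betaGap b` of the boxes of row `a` fill `T`, since there are as many boxes as gaps
  have hsub : (range (μ.rowLen a)).image μ.betaGap ⊆ T := by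
    simp only [subset_iff, mem_image, mem_range, T, mem_filter]
    rintro _ ⟨b, hb, rfl⟩
    have := hookLen_add_betaGap (mem_iff_lt_rowLen.2 hb)
    have := hookLen_pos (mem_iff_lt_rowLen.2 hb)
    exact ⟨by omega, betaGap_notMem_betaSet b⟩
  have hbelow : (Ioo a (μ.colLen 0)).image (hookLen μ · 0) ⊆
      (range (hookLen μ a 0)).filter (· ∈ μ.betaSet) := by
    simp only [subset_iff, mem_image, mem_Ioo, mem_filter, mem_range]
    rintro _ ⟨a', ⟨haa', ha'⟩, rfl⟩
    exact ⟨hookLen_zero_strictAntiOn ha ha' haa', mem_betaSet.2 ⟨a', ha', rfl⟩⟩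
  have hcard : T.card ≤ ((range (μ.rowLen a)).image μ.betaGap).card := by
    have hle := card_le_card hbelow
    rw [card_image_of_injOn (hookLen_zero_strictAntiOn.injOn.mono fun x hx => (mem_Ioo.1 hx).2),
      Nat.card_Ioo] at hle
    have hsplit := card_filter_add_card_filter_not (s := range (hookLen μ a 0)) (· ∈ μ.betaSet)
    rw [card_range] at hsplit
    rw [card_image_of_injective _ betaGap_strictMono.injective, card_range]
    simp only [T, hookLen] at *
    omega
  have htT : t ∈ T := mem_filter.2 ⟨mem_range.2 ht, htB⟩
  rw [← eq_of_subset_of_card_le hsub hcard] at htT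
  obtain ⟨b, hb, rfl⟩ := mem_image.1 htT
  have hab := mem_iff_lt_rowLen.2 (mem_range.1 hb)
  exact ⟨b, hab, hookLen_add_betaGap hab⟩

theorem isCore_iff_subClosed (L : ℕ) (μ : YoungDiagram) : IsCore L μ ↔ SubClosed L μ.betaSet := by
  constructor
  · intro hcore h hh hLh
    by_contra hnot
    obtain ⟨a, ha, rfl⟩ := mem_betaSet.1 hh
    obtain ⟨b, hab, hhook⟩ := exists_hookLen_add_eq ha
      (by have : hookLen μ a 0 - L ≠ hookLen μ a 0 := fun h => hnot (by rwa [h]); omega) hnot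
    exact hcore a b hab ⟨1, by omega⟩
  · rintro hB a b hab ⟨c, hc⟩
    have ha : a < μ.colLen 0 := (mem_iff_lt_colLen.1 hab).trans_le (μ.colLen_anti 0 b b.zero_le)
    have hsum := hookLen_add_betaGap hab
    have := hB.sub_mul_mem (mem_betaSet.2 ⟨a, ha, rfl⟩) c (by rw [mul_comm]; omega)
    rw [mul_comm, ← hc, ← hsum, Nat.add_sub_cancel_left] at this
    exact betaGap_notMem_betaSet b this

lemma sort_betaSet (μ : YoungDiagram) :
    μ.betaSet.sort (· ≤ ·) = List.ofFn fun j : Fin (μ.colLen 0) => hookLen μ j.rev 0 := by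
  have hf : StrictMono fun j : Fin (μ.colLen 0) => hookLen μ j.rev 0 := fun i j hij =>
    hookLen_zero_strictAntiOn (Fin.is_lt _) (Fin.is_lt _) (Fin.rev_lt_rev.2 hij)
  have hB : μ.betaSet = (List.ofFn fun j : Fin (μ.colLen 0) => hookLen μ j.rev 0).toFinset := by
    ext x
    simp only [mem_betaSet, List.mem_toFinset, List.mem_ofFn]
    constructor
    · rintro ⟨a, ha, rfl⟩
      exact ⟨Fin.rev ⟨a, ha⟩, by rw [Fin.rev_rev]⟩
    · rintro ⟨j, rfl⟩
      exact ⟨_, j.rev.is_lt, rfl⟩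
  rw [hB, List.toFinset_sort _ (List.nodup_ofFn.2 hf.injective)]
  exact List.pairwise_ofFn.2 fun i j hij => (hf hij).le

lemma getElem?_sort_betaSet {a : ℕ} (ha : a < μ.colLen 0) :
    (μ.betaSet.sort (· ≤ ·))[μ.colLen 0 - 1 - a]? = some (hookLen μ a 0) := by
  rw [sort_betaSet, List.getElem?_ofFn]
  simp [Fin.rev, show μ.colLen 0 - 1 - a < μ.colLen 0 by omega,
    show μ.colLen 0 - (μ.colLen 0 - 1 - a + 1) = a by omega]

lemma betaSet_injective : Function.Injective betaSet := by
  intro μ ν h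
  have hr : μ.colLen 0 = ν.colLen 0 := by rw [← card_betaSet, h, card_betaSet]
  have hrow : ∀ a, μ.rowLen a = ν.rowLen a := by
    intro a
    by_cases ha : a < μ.colLen 0
    · have hμ := getElem?_sort_betaSet ha
      rw [h, hr, getElem?_sort_betaSet (hr ▸ ha), Option.some_inj] at hμ
      simp only [hookLen] at hμ
      omega
    · rw [rowLen_eq_zero (not_lt.1 ha), rowLen_eq_zero (hr ▸ not_lt.1 ha)]
  ext ⟨a, b⟩
  simp only [mem_cells, mem_iff_lt_rowLen, hrow]

lemma exists_betaSet_eq {B : Finset ℕ} (hB : 0 ∉ B) : ∃ μ : YoungDiagram, μ.betaSet = B := by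
  set g := B.orderEmbOfFin rfl
  have hg : ∀ j : Fin B.card, (j : ℕ) + 1 ≤ g j := fun j => by
    have h0 : g ⟨0, j.pos⟩ ≠ 0 := fun h => hB (h ▸ B.orderEmbOfFin_mem rfl _)
    have := Fin.add_sub_le_of_strictMono g.strictMono
      (show (⟨0, j.pos⟩ : Fin B.card) ≤ j from Nat.zero_le _)
    simp only [Nat.sub_zero] at this
    omega
  set w := List.ofFn fun a : Fin B.card => g a.rev - a.rev
  have hw : w.SortedGE := List.sortedGE_ofFn_iff.2 fun a a' h => by
    have := Fin.add_sub_le_of_strictMono g.strictMono (Fin.rev_le_rev.2 h)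
    have := hg a'.rev
    have : (a'.rev : ℕ) ≤ a.rev := Fin.rev_le_rev.2 h
    omega
  have hpos : ∀ x ∈ w, 0 < x := by
    intro x hx
    obtain ⟨a, rfl⟩ := List.mem_ofFn.1 hx
    have := hg a.rev
    omega
  have hcol : (ofRowLens w hw).colLen 0 = B.card := by
    rw [← length_rowLens, rowLens_length_ofRowLens hpos, List.length_ofFn]
  have hhook : ∀ a : Fin B.card, hookLen (ofRowLens w hw) a 0 = g a.rev := fun a => by
    have hrow : (ofRowLens w hw).rowLen a = g a.rev - a.rev := by
      simpa [w] using rowLen_ofRowLens (w := w) (hw := hw) ⟨a, by simp [w]⟩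
    have := hg a.rev
    simp only [hookLen, hcol, hrow, Fin.val_rev] at *
    omega
  refine ⟨ofRowLens w hw, ?_⟩
  ext x
  rw [mem_betaSet, hcol]
  constructor
  · rintro ⟨a, ha, rfl⟩
    exact hhook ⟨a, ha⟩ ▸ B.orderEmbOfFin_mem rfl _
  · intro hx
    obtain ⟨j, rfl⟩ : x ∈ Set.range g := by rwa [Finset.range_orderEmbOfFin]
    exact ⟨j.rev, j.rev.is_lt, by rw [hhook j.rev, Fin.rev_rev]⟩

noncomputable def betaEquiv : YoungDiagram ≃ {B : Finset ℕ // 0 ∉ B} :=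
  Equiv.ofBijective (fun μ => ⟨μ.betaSet, zero_notMem_betaSet⟩)
    ⟨fun _ _ h => betaSet_injective (congrArg Subtype.val h),
      fun B => (exists_betaSet_eq B.2).imp fun _ h => Subtype.ext h⟩

lemma rowLen_zero_add_card_betaSet (μ : YoungDiagram) :
    μ.rowLen 0 + μ.betaSet.card = μ.betaSet.sup (· + 1) := by
  rw [card_betaSet]
  rcases Nat.eq_zero_or_pos (μ.colLen 0) with h | h
  · simp [betaSet, h, rowLen_eq_zero h.le]
  · have hmax : μ.betaSet.sup (· + 1) = hookLen μ 0 0 + 1 := by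
      refine le_antisymm (Finset.sup_le fun x hx => ?_)
        (le_sup (f := (· + 1)) (mem_betaSet.2 ⟨0, h, rfl⟩))
      obtain ⟨a, ha, rfl⟩ := mem_betaSet.1 hx
      have := hookLen_zero_strictAntiOn.antitoneOn (a := 0) (b := a) h ha a.zero_le
      omega
    rw [hmax]
    have := rowLen_pos_iff.2 h
    simp only [hookLen]
    omega

end YoungDiagram

namespace Abacus

section Cores

variable {d : ℕ}

/-- Position of the `z`-th bead on runner `i` of an abacus with `d + 1` runners. Runner `i`
holds the residue `i + 1` modulo `d + 1`; the runner of residue `0` is left out, since it is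
empty for the beta-set of a `(d + 1)`-core. -/
def beadPos (d : ℕ) (i : Fin d) (z : ℕ) : ℕ := i + 1 + (d + 1) * z

lemma beadPos_mod (i : Fin d) (z : ℕ) : beadPos d i z % (d + 1) = i + 1 := by
  rw [beadPos, Nat.add_mul_mod_self_left, Nat.mod_eq_of_lt (by omega)]

lemma beadPos_div (i : Fin d) (z : ℕ) : beadPos d i z / (d + 1) = z := by
  rw [beadPos, Nat.add_mul_div_left _ _ d.succ_pos, Nat.div_eq_of_lt (by omega), zero_add]

lemma beadPos_injective2 : Function.Injective2 (beadPos d) := fun i i' z z' h => by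
  have hmod := congrArg (· % (d + 1)) h
  have hdiv := congrArg (· / (d + 1)) h
  simp only [beadPos_mod, beadPos_div] at hmod hdiv
  exact ⟨Fin.ext (by omega), hdiv⟩

lemma exists_beadPos_eq {x : ℕ} (hx : ¬ d + 1 ∣ x) : ∃ i z, beadPos d i z = x := by
  have := Nat.mod_lt x (show 0 < d + 1 by omega)
  have := Nat.div_add_mod x (d + 1)
  have : x % (d + 1) ≠ 0 := fun h => hx (Nat.dvd_of_mod_eq_zero h)
  exact ⟨⟨x % (d + 1) - 1, by omega⟩, x / (d + 1), by simp only [beadPos]; omega⟩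

def beads (d : ℕ) (n : Fin d → ℕ) : Finset ℕ :=
  univ.biUnion fun i => (range (n i)).image (beadPos d i)

lemma mem_beads {n : Fin d → ℕ} {x : ℕ} : x ∈ beads d n ↔ ∃ i, ∃ z < n i, beadPos d i z = x := by
  simp [beads]

noncomputable def runner (d : ℕ) (B : Finset ℕ) (i : Fin d) : Finset ℕ :=
  B.preimage (beadPos d i) fun _ _ _ _ h => (beadPos_injective2 h).2

lemma mem_runner {B : Finset ℕ} {i : Fin d} {z : ℕ} : z ∈ runner d B i ↔ beadPos d i z ∈ B :=
  mem_preimage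

noncomputable def beadCount (d : ℕ) (B : Finset ℕ) (i : Fin d) : ℕ := (runner d B i).card

lemma runner_beads (n : Fin d → ℕ) (i : Fin d) : runner d (beads d n) i = range (n i) := by
  ext z
  simp only [mem_runner, mem_beads, mem_range]
  constructor
  · rintro ⟨i', z', hz', h⟩
    obtain ⟨rfl, rfl⟩ := beadPos_injective2 h
    exact hz'
  · exact fun hz => ⟨i, z, hz, rfl⟩

lemma beadCount_beads (n : Fin d → ℕ) : beadCount d (beads d n) = n := by
  ext i
  rw [beadCount, runner_beads, card_range]

lemma card_beads (n : Fin d → ℕ) : (beads d n).card = ∑ i, n i := by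
  rw [beads, card_biUnion]
  · simp [card_image_of_injective _ fun _ _ h => (beadPos_injective2 h).2]
  · intro i _ i' _ hii'
    simp only [Function.onFun, disjoint_left, mem_image, not_exists, not_and]
    rintro _ ⟨z, _, rfl⟩ z' _ h
    exact hii' (beadPos_injective2 h).1.symm

lemma zero_notMem_beads (n : Fin d → ℕ) : 0 ∉ beads d n := by
  simp [mem_beads, beadPos]

lemma subClosed_beads (n : Fin d → ℕ) : SubClosed (d + 1) (beads d n) := by
  intro x hx hdx
  obtain ⟨i, z, hz, rfl⟩ := mem_beads.1 hx
  rcases z with _ | z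
  · simp only [beadPos] at hdx
    omega
  · exact mem_beads.2 ⟨i, z, by omega, by simp only [beadPos, Nat.mul_succ]; omega⟩

lemma runner_eq_range {B : Finset ℕ} (hB : SubClosed (d + 1) B) (i : Fin d) :
    runner d B i = range (beadCount d B i) :=
  eq_range_card_of_forall_le_mem fun z hz y hyz => by
    obtain ⟨t, rfl⟩ := Nat.exists_eq_add_of_le hyz
    have hpos : beadPos d i (y + t) = beadPos d i y + t * (d + 1) := by
      simp only [beadPos]
      ring
    have := hB.sub_mul_mem (mem_runner.1 hz) t (by omega)
    rwa [hpos, Nat.add_sub_cancel, ← mem_runner] at this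

lemma beads_beadCount {B : Finset ℕ} (h0 : 0 ∉ B) (hB : SubClosed (d + 1) B) :
    beads d (beadCount d B) = B := by
  have hmem : ∀ i z, z < beadCount d B i ↔ beadPos d i z ∈ B := fun i z => by
    rw [← mem_range, ← runner_eq_range hB, mem_runner]
  ext x
  rw [mem_beads]
  constructor
  · rintro ⟨i, z, hz, rfl⟩
    exact (hmem i z).1 hz
  · intro hx
    obtain ⟨i, z, rfl⟩ := exists_beadPos_eq (hB.not_dvd h0 hx)
    exact ⟨i, z, (hmem i z).2 hx, rfl⟩

noncomputable def closedEquiv (d : ℕ) :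
    {B : Finset ℕ // 0 ∉ B ∧ SubClosed (d + 1) B} ≃ (Fin d → ℕ) where
  toFun B := beadCount d B
  invFun n := ⟨beads d n, zero_notMem_beads n, subClosed_beads n⟩
  left_inv B := Subtype.ext (beads_beadCount B.2.1 B.2.2)
  right_inv := beadCount_beads

-- `beadPos d i (n i)` is the first free position on runner `i`.
def topGap (n : Fin d → ℕ) : ℕ := univ.sup fun i => beadPos d i (n i)

lemma beadPos_le_topGap (n : Fin d → ℕ) (i : Fin d) : beadPos d i (n i) ≤ topGap n :=
  le_sup (f := fun i => beadPos d i (n i)) (mem_univ i)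

lemma topGap_eq_sup_beads (n : Fin d → ℕ) : topGap n = (beads d n).sup (· + 1) + d := by
  apply le_antisymm
  · refine Finset.sup_le fun i _ => ?_
    rcases Nat.eq_zero_or_pos (n i) with h | h
    · simp only [beadPos, h]
      omega
    · obtain ⟨z, hz⟩ := Nat.exists_eq_add_one_of_ne_zero h.ne'
      have := le_sup (f := (· + 1)) (mem_beads (n := n).2 ⟨i, z, by omega, rfl⟩)
      have : beadPos d i (n i) = beadPos d i z + (d + 1) := by
        simp only [beadPos, hz]
        ring
      omega
  · have hd : d ≤ topGap n := by
      rcases d with _ | d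
      · exact Nat.zero_le _
      · have := beadPos_le_topGap n (Fin.last d)
        simp only [beadPos, Fin.val_last] at this
        omega
    suffices (beads d n).sup (· + 1) ≤ topGap n - d by omega
    refine Finset.sup_le fun x hx => ?_
    obtain ⟨i, z, hz, rfl⟩ := mem_beads.1 hx
    have := beadPos_le_topGap n i
    have : (d + 1) * (z + 1) ≤ (d + 1) * n i := Nat.mul_le_mul_left _ hz
    simp only [beadPos] at *
    rw [Nat.mul_succ] at *
    omega

noncomputable def coreEquiv (d : ℕ) : {μ : YoungDiagram // IsCore (d + 1) μ} ≃ (Fin d → ℕ) :=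
  (YoungDiagram.betaEquiv.subtypeEquiv fun μ => YoungDiagram.isCore_iff_subClosed (d + 1) μ).trans
    ((Equiv.subtypeSubtypeEquivSubtypeInter _ _).trans (closedEquiv d))

lemma betaSet_coreEquiv_symm (n : Fin d → ℕ) : ((coreEquiv d).symm n).1.betaSet = beads d n := by
  set μ := (coreEquiv d).symm n
  have h : beadCount d μ.1.betaSet = n := (coreEquiv d).apply_symm_apply n
  rw [← h, beads_beadCount YoungDiagram.zero_notMem_betaSet
    ((YoungDiagram.isCore_iff_subClosed _ _).1 μ.2)]

noncomputable def largestPart (n : Fin d → ℕ) : ℕ := ((coreEquiv d).symm n).1.rowLen 0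

lemma topGap_eq_largestPart_add (n : Fin d → ℕ) : topGap n = largestPart n + ∑ i, n i + d := by
  rw [topGap_eq_sup_beads, ← card_beads, ← betaSet_coreEquiv_symm,
    ← YoungDiagram.rowLen_zero_add_card_betaSet, largestPart]

noncomputable def coreSubtypeEquiv (d : ℕ) (p : ℕ → Prop) :
    {μ : YoungDiagram // IsCore (d + 1) μ ∧ p (μ.rowLen 0)} ≃
      {n : Fin d → ℕ // p (largestPart n)} :=
  (Equiv.subtypeSubtypeEquivSubtypeInter _ _).symm.trans
    ((coreEquiv d).subtypeEquiv fun μ => by simp [largestPart])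

end Cores

section Insertion

variable {e : ℕ}

lemma topGap_insertNth {m : Fin e → ℕ} {P : Fin (e + 1)} {v : ℕ}
    (hm : topGap m ≤ P + (e + 1) * v) :
    topGap (P.insertNth v m : Fin (e + 1) → ℕ) = beadPos (e + 1) P v := by
  refine le_antisymm (Finset.sup_le fun i _ => ?_) ?_
  · induction i using Fin.succAboveCases P with
    | x => simp
    | p j =>
      simp only [Fin.insertNth_apply_succAbove]
      have hj := (beadPos_le_topGap m j).trans hm
      have hmv : m j ≤ v := by
        by_contra! h
        have : (e + 1) * (v + 1) ≤ (e + 1) * m j := Nat.mul_le_mul_left _ h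
        rw [Nat.mul_succ] at this
        simp only [beadPos] at hj
        omega
      have := Fin.val_succAbove P j
      simp only [beadPos] at *
      split_ifs at * <;> nlinarith
  · simpa using beadPos_le_topGap (P.insertNth v m : Fin (e + 1) → ℕ) P

lemma topGap_removeNth_le {n : Fin (e + 1) → ℕ} {J : Fin (e + 1)}
    (hJ : beadPos (e + 1) J (n J) = topGap n) :
    topGap (J.removeNth n) ≤ J + (e + 1) * n J := by
  refine Finset.sup_le fun j _ => ?_
  -- beads of distinct runners never coincide, so runner `J` strictly dominates
  have hlt : beadPos (e + 1) (J.succAbove j) (n (J.succAbove j)) < beadPos (e + 1) J (n J) :=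
    lt_of_le_of_ne (hJ ▸ beadPos_le_topGap n _)
      fun h => J.succAbove_ne j (beadPos_injective2 h).1
  have := Fin.val_succAbove J j
  simp only [Fin.removeNth, beadPos] at *
  split_ifs at * with hjJ
  · have : n (J.succAbove j) ≤ n J := by
      by_contra! h
      have := Nat.mul_le_mul_left (e + 1 + 1) h
      rw [Nat.mul_succ] at this
      omega
    nlinarith
  · have : n (J.succAbove j) + 1 ≤ n J := by
      by_contra! h
      have := Nat.mul_le_mul_left (e + 1 + 1) (show n J ≤ n (J.succAbove j) by omega)
      omega
    have := Nat.mul_le_mul_left (e + 1) this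
    rw [Nat.mul_succ] at this
    omega

def insertRunner (s : ℕ) (m : Fin e → ℕ) : Fin (e + 1) → ℕ :=
  (Fin.ofNat (e + 1) s).insertNth (s / (e + 1)) m

lemma topGap_insertRunner {s : ℕ} {m : Fin e → ℕ} (hm : topGap m ≤ s) :
    topGap (insertRunner s m) = beadPos (e + 1) (Fin.ofNat (e + 1) s) (s / (e + 1)) :=
  topGap_insertNth (by rw [Fin.val_ofNat, Nat.mod_add_div]; exact hm)

lemma topGap_le_of_largestPart_le {k : ℕ} {m : Fin e → ℕ} (hm : largestPart m ≤ k) :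
    topGap m ≤ k + ∑ j, m j + e := by
  rw [topGap_eq_largestPart_add]
  omega

lemma largestPart_insertRunner {k : ℕ} {m : Fin e → ℕ} (hm : largestPart m ≤ k) :
    largestPart (insertRunner (k + ∑ j, m j + e) m) = k := by
  have htop := topGap_insertRunner (topGap_le_of_largestPart_le hm)
  have hsum : ∑ i, insertRunner (k + ∑ j, m j + e) m i =
      (k + ∑ j, m j + e) / (e + 1) + ∑ j, m j :=
    Fin.sum_insertNth _ _ _
  rw [topGap_eq_largestPart_add, hsum] at htop
  have hdiv := Nat.mod_add_div (k + ∑ j, m j + e) (e + 1)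
  simp only [beadPos, Fin.val_ofNat] at htop
  have : (e + 1 + 1) * ((k + ∑ j, m j + e) / (e + 1)) =
      (e + 1) * ((k + ∑ j, m j + e) / (e + 1)) + (k + ∑ j, m j + e) / (e + 1) := by ring
  omega

lemma eq_of_insertRunner_eq {s s' : ℕ} {m m' : Fin e → ℕ} (hm : topGap m ≤ s)
    (hm' : topGap m' ≤ s') (h : insertRunner s m = insertRunner s' m') : m = m' := by
  have hpos := (topGap_insertRunner hm).symm.trans (h ▸ topGap_insertRunner hm')
  obtain ⟨hP, -⟩ := beadPos_injective2 hpos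
  calc m = (Fin.ofNat (e + 1) s).removeNth (insertRunner s m) := by
        rw [insertRunner, Fin.removeNth_insertNth]
    _ = (Fin.ofNat (e + 1) s').removeNth (insertRunner s' m') := by rw [hP, h]
    _ = m' := by rw [insertRunner, Fin.removeNth_insertNth]

lemma exists_insertRunner_eq {k : ℕ} {n : Fin (e + 1) → ℕ} (hn : largestPart n = k) :
    ∃ m : Fin e → ℕ, largestPart m ≤ k ∧ insertRunner (k + ∑ j, m j + e) m = n := by
  obtain ⟨J, -, hJ⟩ := exists_mem_eq_sup univ univ_nonempty fun i => beadPos (e + 1) i (n i)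
  have hsum := Fin.add_sum_removeNth J n
  have htop := topGap_eq_largestPart_add n
  have hdel := topGap_removeNth_le hJ.symm
  rw [topGap_eq_largestPart_add] at hdel
  have : (e + 1 + 1) * n J = (e + 1) * n J + n J := by ring
  have hs : k + ∑ j, J.removeNth n j + e = J + (e + 1) * n J := by
    simp only [topGap, beadPos] at htop hJ
    omega
  refine ⟨J.removeNth n, by omega, ?_⟩
  have hJ' : Fin.ofNat (e + 1) (J + (e + 1) * n J) = J := by ext; simp [Nat.mod_eq_of_lt J.is_lt]
  have hv : (J + (e + 1) * n J) / (e + 1) = n J := by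
    rw [Nat.add_mul_div_left _ _ e.succ_pos, Nat.div_eq_of_lt J.is_lt, zero_add]
  rw [hs, insertRunner, hJ', hv, Fin.insertNth_self_removeNth]

noncomputable def insertRunnerEquiv (e k : ℕ) :
    {m : Fin e → ℕ // largestPart m ≤ k} ≃ {n : Fin (e + 1) → ℕ // largestPart n = k} :=
  Equiv.ofBijective
    (fun m => ⟨insertRunner (k + ∑ j, m.1 j + e) m.1, largestPart_insertRunner m.2⟩)
    ⟨fun m m' h => Subtype.ext (eq_of_insertRunner_eq (topGap_le_of_largestPart_le m.2)
        (topGap_le_of_largestPart_le m'.2) (congrArg Subtype.val h)),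
      fun n => let ⟨m, hm, h⟩ := exists_insertRunner_eq n.2; ⟨⟨m, hm⟩, Subtype.ext h⟩⟩

end Insertion

end Abacus

/-- There is a bijection between the set of `ℓ`-core partitions with largest part
equal to `k` and the set of `(ℓ-1)`-core partitions with largest part at most `k`. -/
theorem stmt_1 (ℓ k : ℕ) (hℓ : 2 ≤ ℓ) :
    Nonempty ({μ : YoungDiagram // IsCore ℓ μ ∧ μ.rowLen 0 = k} ≃
      {μ : YoungDiagram // IsCore (ℓ - 1) μ ∧ μ.rowLen 0 ≤ k}) := by
  obtain ⟨e, rfl⟩ : ∃ e, ℓ = e + 2 := ⟨ℓ - 2, by omega⟩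
  exact ⟨(Abacus.coreSubtypeEquiv (e + 1) (· = k)).trans
    ((Abacus.insertRunnerEquiv e k).symm.trans (Abacus.coreSubtypeEquiv e (· ≤ k)).symm)⟩
end

section
/- A partition λ is an ℓ-partition if and only if it satisfies condition (⋆): for all boxes (a,c) and (b,c) in the same column of λ, ℓ divides the hook length h_{(a,c)} if and only if ℓ divides h_{(b,c)}. -/
/-- Two cells are adjacent if they share an edge. -/
def AdjCell (p q : ℕ × ℕ) : Prop :=
  (p.1 = q.1 ∧ (p.2 = q.2 + 1 ∨ q.2 = p.2 + 1)) ∨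
  (p.2 = q.2 ∧ (p.1 = q.1 + 1 ∨ q.1 = p.1 + 1))

/-- A finite set of cells is connected if any two of its cells are joined by a
path of edge-adjacent cells inside the set. -/
def ConnectedCells (s : Finset (ℕ × ℕ)) : Prop :=
  ∀ p ∈ s, ∀ q ∈ s,
    Relation.ReflTransGen (fun x y => x ∈ s ∧ y ∈ s ∧ AdjCell x y) p q

/-- A set of cells contains no 2×2 square. -/
def No2x2 (s : Finset (ℕ × ℕ)) : Prop :=
  ¬ ∃ a b : ℕ, (a, b) ∈ s ∧ (a + 1, b) ∈ s ∧ (a, b + 1) ∈ s ∧ (a + 1, b + 1) ∈ s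

/-- `s` is a removable `ℓ`-rim hook of the Young diagram `lam`: a connected set of
`ℓ` cells of `lam`, containing no 2×2 square, whose removal from `lam` leaves the
Young diagram of a partition. -/
def IsRemovableRimHook (ℓ : ℕ) (lam : YoungDiagram) (s : Finset (ℕ × ℕ)) : Prop :=
  ∃ μ : YoungDiagram, μ.cells ⊆ lam.cells ∧ s = lam.cells \ μ.cells ∧
    s.card = ℓ ∧ ConnectedCells s ∧ No2x2 s

/-- A set of cells all lying in a single row. -/
def HorizontalCells (s : Finset (ℕ × ℕ)) : Prop := ∀ p ∈ s, ∀ q ∈ s, p.1 = q.1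

/-- A set of cells all lying in a single column. -/
def VerticalCells (s : Finset (ℕ × ℕ)) : Prop := ∀ p ∈ s, ∀ q ∈ s, p.2 = q.2

/-- Carter's condition (⋆): for all pairs of boxes in the same column of `lam`,
`ℓ` divides one hook length iff it divides the other. -/
def StarCond (ℓ : ℕ) (lam : YoungDiagram) : Prop :=
  ∀ a b c : ℕ, (a, c) ∈ lam → (b, c) ∈ lam →
    (ℓ ∣ hookLen lam a c ↔ ℓ ∣ hookLen lam b c)

/-- `b` is obtained from `a` by removing a horizontal `ℓ`-rim hook;
equivalently `a` is obtained from `b` by adding a horizontal `ℓ`-rim hook. -/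
def RemoveHorizHook (ℓ : ℕ) (a b : YoungDiagram) : Prop :=
  ∃ s, IsRemovableRimHook ℓ a s ∧ HorizontalCells s ∧ b.cells = a.cells \ s

/-- A partition is `ℓ`-regular if it has no `ℓ` equal nonzero parts. -/
def Regular (ℓ : ℕ) (lam : YoungDiagram) : Prop :=
  ∀ i : ℕ, lam.rowLen i = lam.rowLen (i + ℓ - 1) → lam.rowLen i = 0

/-- An `ℓ`-partition: an `ℓ`-regular partition each of whose removable `ℓ`-rim hooks
is horizontal, and such that this remains true after removing any sequence of
horizontal `ℓ`-rim hooks. -/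
def IsEllPartition (ℓ : ℕ) (lam : YoungDiagram) : Prop :=
  Regular ℓ lam ∧
  ∀ μ : YoungDiagram, Relation.ReflTransGen (RemoveHorizHook ℓ) lam μ →
    ∀ s, IsRemovableRimHook ℓ μ s → HorizontalCells s

/-!
Encode a partition on an abacus: row `i` carries the bead `λᵢ - i`, column `j` the gap
`j + 1 - λ'ⱼ`, and the hook length of the box `(a, c)` is the distance from the bead of row `a`
down to the gap of column `c`. Removing an `ℓ`-rim hook is sliding a bead from `t` down to an
empty position `t - ℓ`, and the hook is horizontal exactly when the slide jumps over no bead.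
Condition (⋆) says that, seen from any gap, the beads above it are either all on its runner
(congruent to it mod `ℓ`) or all off it.

(⋆) forbids slides over beads and survives every slide, which gives one direction. Conversely,
if a gap `g` has beads above it both on and off its runner, take the lowest such beads `x` and
`y`. Sliding `x` keeps the defect unless `x = g + ℓ`; then the slide of `x` being horizontal puts
`y` above `x`, and sliding `y` keeps it. Either way a smaller reachable partition has the defect,
so induction on the size concludes.
-/

namespace StrictAnti

variable {f : ℕ → ℤ}

theorem antitone_add_natCast (hf : StrictAnti f) : Antitone fun i => f i + i :=
  antitone_nat_of_succ_le fun i => by have := hf (Nat.lt_add_one i); push_cast; omega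

theorem notMem_range_of_lt_of_lt (hf : StrictAnti f) {n : ℕ} {x : ℤ} (h₁ : f (n + 1) < x)
    (h₂ : x < f n) : x ∉ Set.range f := by
  rintro ⟨i, rfl⟩
  rcases le_or_gt i n with hi | hi
  · exact (hf.antitone hi).not_gt h₂
  · exact (hf.antitone (Nat.succ_le_of_lt hi)).not_gt h₁

theorem exists_lt_lt_of_notMem_range (hf : StrictAnti f) {x : ℤ} (hx : x ∉ Set.range f)
    (h₀ : x < f 0) : ∃ n, f (n + 1) < x ∧ x < f n := by
  classical
  have hex : ∃ n, f (n + 1) < x := ⟨(f 0 - x).toNat, by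
    have := hf.antitone_add_natCast (Nat.zero_le ((f 0 - x).toNat + 1)); push_cast at this; omega⟩
  refine ⟨Nat.find hex, Nat.find_spec hex, ?_⟩
  cases hn : Nat.find hex with
  | zero => exact h₀
  | succ m =>
    have := Nat.find_min hex (hn ▸ Nat.lt_add_one m)
    exact lt_of_le_of_ne (not_lt.mp this) fun heq => hx ⟨_, heq.symm⟩

end StrictAnti

def moveBead (B : Set ℤ) (t u : ℤ) : Set ℤ := insert u (B \ {t})

theorem mem_moveBead {B : Set ℤ} {t u z : ℤ} : z ∈ moveBead B t u ↔ z = u ∨ z ∈ B ∧ z ≠ t := by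
  simp [moveBead]

/-- Condition (⋆) on an abacus: seen from any gap `g`, either every bead above `g` lies on the
runner of `g` or none does. -/
def AbacusStar (l : ℕ) (B : Set ℤ) : Prop :=
  ∀ g ∉ B, ∀ x ∈ B, ∀ y ∈ B, g < x → g < y → ((l : ℤ) ∣ x - g ↔ (l : ℤ) ∣ y - g)

namespace AbacusStar

variable {l : ℕ} {B : Set ℤ} {t : ℤ}

theorem notMem_of_mem_Ioo (h : AbacusStar l B) (ht : t ∈ B) (htl : t - l ∉ B) {w : ℤ}
    (hw : w ∈ Set.Ioo (t - l) t) : w ∉ B := by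
  intro hwB
  have hdvd : (l : ℤ) ∣ w - (t - l) :=
    (h _ htl t ht w hwB (by linarith [hw.1, hw.2]) hw.1).mp ⟨1, by ring⟩
  have := Int.le_of_dvd (by linarith [hw.1]) hdvd
  linarith [hw.2]

theorem moveBead (h : AbacusStar l B) (ht : t ∈ B) (htl : t - l ∉ B) :
    AbacusStar l (moveBead B t (t - l)) := by
  intro g hg x hx y hy hgx hgy
  simp only [mem_moveBead, not_or, not_and, not_not] at hg hx hy
  by_cases hgt : g = t
  · subst hgt
    -- every bead above the new gap `g` sits on the runner of the gap `g - l` below it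
    have hrunner : ∀ w, (w = g - l ∨ w ∈ B ∧ w ≠ g) → g < w → (l : ℤ) ∣ w - g := by
      rintro w (rfl | ⟨hw, -⟩) hgw
      · omega
      · have := (h _ htl w hw g ht (by omega) (by omega)).mpr ⟨1, by ring⟩
        rwa [show w - (g - l) = w - g + l by ring, dvd_add_self_right] at this
    exact iff_of_true (hrunner x hx hgx) (hrunner y hy hgy)
  · have hgB : g ∉ B := fun hgB => hgt (hg.2 hgB)
    -- the moved bead `t - l` is on the same runner as `t`
    have hlift : ∀ w, (w = t - l ∨ w ∈ B ∧ w ≠ t) → g < w →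
        ∃ w' ∈ B, g < w' ∧ ((l : ℤ) ∣ w - g ↔ (l : ℤ) ∣ w' - g) := by
      rintro w (rfl | ⟨hw, -⟩) hgw
      · refine ⟨t, ht, by omega, ?_⟩
        rw [show t - l - g = t - g - l by ring, dvd_sub_self_right]
      · exact ⟨w, hw, hgw, Iff.rfl⟩
    obtain ⟨x', hx', hgx', hxx'⟩ := hlift x hx hgx
    obtain ⟨y', hy', hgy', hyy'⟩ := hlift y hy hgy
    rw [hxx', hyy']
    exact h g hgB x' hx' y' hy' hgx' hgy'

end AbacusStar

def AbacusDefect (l : ℕ) (B : Set ℤ) : Prop :=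
  ∃ g ∉ B, ∃ x ∈ B, ∃ y ∈ B, g < x ∧ g < y ∧ (l : ℤ) ∣ x - g ∧ ¬ (l : ℤ) ∣ y - g

theorem abacusStar_of_not_abacusDefect {l : ℕ} {B : Set ℤ} (h : ¬ AbacusDefect l B) :
    AbacusStar l B := fun g hg x hx y hy hgx hgy =>
  ⟨fun hdx => not_not.mp fun hdy => h ⟨g, hg, x, hx, y, hy, hgx, hgy, hdx, hdy⟩,
    fun hdy => not_not.mp fun hdx => h ⟨g, hg, y, hy, x, hx, hgy, hgx, hdy, hdx⟩⟩

theorem AbacusDefect.exists_least {l : ℕ} {B : Set ℤ} (h : AbacusDefect l B) :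
    ∃ g ∉ B, ∃ x ∈ B, ∃ y ∈ B, g < x ∧ g ≤ x - l ∧ g < y ∧ (l : ℤ) ∣ x - g ∧
      ¬ (l : ℤ) ∣ y - g ∧ x - l ∉ B ∧ (g < y - l → y - l ∉ B) := by
  obtain ⟨g, hg, x₀, hx₀, y₀, hy₀, hgx₀, hgy₀, hdx₀, hdy₀⟩ := h
  obtain ⟨x, ⟨hx, hgx, hdx⟩, hxmin⟩ :=
    Int.exists_least_of_bdd (P := fun z => z ∈ B ∧ g < z ∧ (l : ℤ) ∣ z - g)
      ⟨g, fun z hz => hz.2.1.le⟩ ⟨x₀, hx₀, hgx₀, hdx₀⟩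
  obtain ⟨y, ⟨hy, hgy, hdy⟩, hymin⟩ :=
    Int.exists_least_of_bdd (P := fun z => z ∈ B ∧ g < z ∧ ¬ (l : ℤ) ∣ z - g)
      ⟨g, fun z hz => hz.2.1.le⟩ ⟨y₀, hy₀, hgy₀, hdy₀⟩
  have hl : 0 < l := Nat.pos_of_ne_zero fun h0 => by
    simp only [h0, Nat.cast_zero, zero_dvd_iff] at hdx; omega
  have hgxl : g ≤ x - l := by have := Int.le_of_dvd (by omega) hdx; omega
  refine ⟨g, hg, x, hx, y, hy, hgx, hgxl, hgy, hdx, hdy, fun hxl => ?_, fun hgyl hyl => ?_⟩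
  · rcases hgxl.eq_or_lt with heq | hlt
    · exact hg (heq ▸ hxl)
    · have := hxmin _ ⟨hxl, hlt, by rwa [sub_right_comm, dvd_sub_self_right]⟩
      omega
  · have := hymin _ ⟨hyl, hgyl, by rwa [sub_right_comm, dvd_sub_self_right]⟩
    omega

def AdjIn (s : Finset (ℕ × ℕ)) (p q : ℕ × ℕ) : Prop := p ∈ s ∧ q ∈ s ∧ AdjCell p q

namespace AdjIn

variable {s : Finset (ℕ × ℕ)}

theorem symm {p q : ℕ × ℕ} (h : AdjIn s p q) : AdjIn s q p := by
  obtain ⟨hp, hq, ⟨h₁, h₂⟩ | ⟨h₁, h₂⟩⟩ := h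
  · exact ⟨hq, hp, Or.inl ⟨h₁.symm, h₂.symm⟩⟩
  · exact ⟨hq, hp, Or.inr ⟨h₁.symm, h₂.symm⟩⟩

instance : Std.Symm (AdjIn s) := ⟨fun _ _ => symm⟩

theorem connectedCells_of_forall_reflTransGen (a : ℕ × ℕ)
    (h : ∀ p ∈ s, Relation.ReflTransGen (AdjIn s) p a) : ConnectedCells s := fun p hp q hq =>
  (h p hp).trans (symm_of _ (h q hq))

theorem reflTransGen_of_row {i lo : ℕ} : ∀ hi, lo ≤ hi → (∀ j, lo ≤ j → j ≤ hi → (i, j) ∈ s) →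
    Relation.ReflTransGen (AdjIn s) (i, hi) (i, lo) := by
  refine Nat.le_induction (fun _ => .refl) fun hi hlo ih hrow => ?_
  refine .head ⟨hrow _ (by omega) le_rfl, hrow _ hlo (by omega), Or.inl ⟨rfl, Or.inl rfl⟩⟩ ?_
  exact ih fun j h₁ h₂ => hrow j h₁ (by omega)

theorem adjCell_rows {p q : ℕ × ℕ} (h : AdjCell p q) : q.1 ≤ p.1 + 1 ∧ p.1 ≤ q.1 + 1 := by
  rcases h with ⟨h₁, -⟩ | ⟨-, h₂ | h₂⟩ <;> omega

theorem exists_mem_row_of_reflTransGen {p q : ℕ × ℕ} (hp : p ∈ s)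
    (h : Relation.ReflTransGen (AdjIn s) p q) {i : ℕ} (h₁ : p.1 ≤ i) (h₂ : i ≤ q.1) :
    ∃ j, (i, j) ∈ s := by
  induction h with
  | refl => exact ⟨p.2, by rwa [show i = p.1 by omega]⟩
  | @tail b c _ hbc ih =>
    rcases le_or_gt i b.1 with hib | hib
    · exact ih hib
    · have := adjCell_rows hbc.2.2
      exact ⟨c.2, by rw [show i = c.1 by omega]; exact hbc.2.1⟩

theorem exists_vertical_of_reflTransGen {p q : ℕ × ℕ} (h : Relation.ReflTransGen (AdjIn s) p q)
    {i : ℕ} (h₁ : p.1 ≤ i) (h₂ : i < q.1) : ∃ j, (i, j) ∈ s ∧ (i + 1, j) ∈ s := by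
  induction h with
  | refl => omega
  | @tail b c _ hbc ih =>
    rcases lt_or_ge i b.1 with hib | hib
    · exact ih hib
    · obtain ⟨hb, hc, ⟨hbc₁, -⟩ | ⟨hbc₁, hbc₂⟩⟩ := hbc
      · omega
      · refine ⟨b.2, ?_, ?_⟩
        · rwa [show i = b.1 by omega]
        · rwa [show i + 1 = c.1 by omega, hbc₁]

end AdjIn

namespace YoungDiagram

variable {l : ℕ} {μ ν : YoungDiagram}

theorem rowLen_eq_of_forall_mem_iff {i n : ℕ} (h : ∀ j, (i, j) ∈ μ ↔ j < n) : μ.rowLen i = n :=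
  eq_of_forall_lt_iff fun j => by rw [← mem_iff_lt_rowLen, h]

theorem rowLen_mono (h : ν ≤ μ) (i : ℕ) : ν.rowLen i ≤ μ.rowLen i := by
  by_contra! hlt
  exact (mem_iff_lt_rowLen.mp (h (mem_iff_lt_rowLen.mpr hlt))).false

def beta (μ : YoungDiagram) (i : ℕ) : ℤ := μ.rowLen i - i

def beads (μ : YoungDiagram) : Set ℤ := Set.range μ.beta

def gap (μ : YoungDiagram) (j : ℕ) : ℤ := j + 1 - μ.colLen j

theorem beta_strictAnti (μ : YoungDiagram) : StrictAnti μ.beta :=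
  strictAnti_nat_of_succ_lt fun i => by
    have := μ.rowLen_anti i (i + 1) (Nat.le_succ i); unfold beta; push_cast; omega

theorem neg_le_beta (μ : YoungDiagram) (i : ℕ) : -(i : ℤ) ≤ μ.beta i := by
  unfold beta; omega

theorem gap_lt_beta_of_mem {a c : ℕ} (h : (a, c) ∈ μ) : μ.gap c < μ.beta a := by
  have := mem_iff_lt_rowLen.mp h; have := mem_iff_lt_colLen.mp h; unfold gap beta; omega

theorem beta_lt_gap_of_notMem {a c : ℕ} (h : (a, c) ∉ μ) : μ.beta a < μ.gap c := by
  rw [mem_iff_lt_rowLen, not_lt] at h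
  have : μ.colLen c ≤ a := not_lt.mp fun h' => by
    have := mem_iff_lt_rowLen.mp (mem_iff_lt_colLen.mpr h'); omega
  unfold gap beta; omega

theorem mem_iff_gap_lt_beta {a c : ℕ} : (a, c) ∈ μ ↔ μ.gap c < μ.beta a :=
  ⟨gap_lt_beta_of_mem, fun h => not_not.mp fun h' => (beta_lt_gap_of_notMem h').not_gt h⟩

theorem hookLen_eq_beta_sub_gap {a c : ℕ} (h : (a, c) ∈ μ) :
    (hookLen μ a c : ℤ) = μ.beta a - μ.gap c := by
  have := mem_iff_lt_rowLen.mp h; have := mem_iff_lt_colLen.mp h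
  unfold hookLen beta gap; omega

theorem gap_notMem_beads (μ : YoungDiagram) (c : ℕ) : μ.gap c ∉ μ.beads := by
  rintro ⟨a, ha⟩
  by_cases h : (a, c) ∈ μ
  · exact (gap_lt_beta_of_mem h).ne' ha
  · exact (beta_lt_gap_of_notMem h).ne ha

theorem exists_gap_eq_of_notMem_beads {x : ℤ} (hx : x ∉ μ.beads) : ∃ c, μ.gap c = x := by
  rcases lt_or_gt_of_ne fun h : x = μ.beta 0 => hx ⟨0, h.symm⟩ with h₀ | h₀
  · obtain ⟨n, h₁, h₂⟩ := μ.beta_strictAnti.exists_lt_lt_of_notMem_range hx h₀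
    unfold beta at h₁ h₂
    have hmem : (n, (x + n).toNat) ∈ μ := mem_iff_lt_rowLen.mpr (by omega)
    have hnotMem : (n + 1, (x + n).toNat) ∉ μ := by rw [mem_iff_lt_rowLen]; omega
    rw [mem_iff_lt_colLen] at hmem hnotMem
    exact ⟨(x + n).toNat, by unfold gap; omega⟩
  · unfold beta at h₀
    have hnotMem : (0, (x - 1).toNat) ∉ μ := by rw [mem_iff_lt_rowLen]; omega
    rw [mem_iff_lt_colLen] at hnotMem
    exact ⟨(x - 1).toNat, by unfold gap; omega⟩

theorem starCond_iff_abacusStar : StarCond l μ ↔ AbacusStar l μ.beads := by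
  constructor
  · rintro hs g hg _ ⟨a, rfl⟩ _ ⟨b, rfl⟩ hga hgb
    obtain ⟨c, rfl⟩ := exists_gap_eq_of_notMem_beads hg
    have ha := mem_iff_gap_lt_beta.mpr hga
    have hb := mem_iff_gap_lt_beta.mpr hgb
    simpa only [← Int.natCast_dvd_natCast, hookLen_eq_beta_sub_gap ha,
      hookLen_eq_beta_sub_gap hb] using hs a b c ha hb
  · intro hs a b c ha hb
    simpa only [← Int.natCast_dvd_natCast, hookLen_eq_beta_sub_gap ha,
      hookLen_eq_beta_sub_gap hb] using hs _ (μ.gap_notMem_beads c) _ ⟨a, rfl⟩ _ ⟨b, rfl⟩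
        (gap_lt_beta_of_mem ha) (gap_lt_beta_of_mem hb)

section Induction

variable (P : YoungDiagram → Prop)
  (hP : ∀ μ, P μ → ∀ t ∈ μ.beads, t - l ∉ μ.beads →
    (∀ w ∈ Set.Ioo (t - l) t, w ∉ μ.beads) ∧
      ∃ ν, P ν ∧ ν.cells.card < μ.cells.card ∧ ν.beads = moveBead μ.beads t (t - l))
include hP

theorem exists_lt_abacusDefect (hμ : P μ) (hdef : AbacusDefect l μ.beads) :
    ∃ ν, P ν ∧ ν.cells.card < μ.cells.card ∧ AbacusDefect l ν.beads := by
  obtain ⟨g, hg, x, hx, y, hy, hgx, hgxl, hgy, hdx, hdy, hxl, hyl⟩ := hdef.exists_least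
  have hdxl : (l : ℤ) ∣ x - l - g := by rwa [sub_right_comm, dvd_sub_self_right]
  have hdyl : ¬ (l : ℤ) ∣ y - l - g := by rwa [sub_right_comm, dvd_sub_self_right]
  obtain ⟨hxhor, ν, hν, hcard, hbeads⟩ := hP μ hμ x hx hxl
  rcases hgxl.eq_or_lt with hgeq | hglt
  · -- `x = g + l`; horizontality at `x` puts `y` above `x`, so sliding `y` keeps the pair `g, x`
    have hxy : x < y := by
      refine lt_of_not_ge fun hyx => hxhor y ⟨by omega, lt_of_le_of_ne hyx ?_⟩ hy
      rintro rfl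
      exact hdy hdx
    obtain ⟨-, ν', hν', hcard', hbeads'⟩ := hP μ hμ y hy (hyl (by omega))
    refine ⟨ν', hν', hcard', g, ?_, x, ?_, y - l, ?_, hgx, by omega, hdx, hdyl⟩ <;>
      rw [hbeads', mem_moveBead]
    · rintro (h | ⟨h, -⟩)
      · omega
      · exact hg h
    · exact Or.inr ⟨hx, by omega⟩
    · exact Or.inl rfl
  · refine ⟨ν, hν, hcard, g, ?_, x - l, ?_, y, ?_, hglt, by omega, hdxl, hdy⟩ <;>
      rw [hbeads, mem_moveBead]
    · rintro (h | ⟨h, -⟩)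
      · omega
      · exact hg h
    · exact Or.inl rfl
    · exact Or.inr ⟨hy, by rintro rfl; exact hdy hdx⟩

theorem abacusStar_of_forall_moveBead (hμ : P μ) : AbacusStar l μ.beads := by
  refine abacusStar_of_not_abacusDefect ?_
  induction h : μ.cells.card using Nat.strong_induction_on generalizing μ with
  | _ n ih =>
    intro hdef
    obtain ⟨ν, hν, hcard, hdefν⟩ := exists_lt_abacusDefect P hP hμ hdef
    exact ih _ (h ▸ hcard) hν rfl hdefν

end Induction

theorem le_of_forall_rowLen_le (h : ∀ i, ν.rowLen i ≤ μ.rowLen i) : ν ≤ μ := by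
  rintro ⟨i, j⟩ hij
  exact mem_iff_lt_rowLen.mpr ((mem_iff_lt_rowLen.mp hij).trans_le (h i))

theorem mk_mem_sdiff_cells_iff (h : ν ≤ μ) {i j : ℕ} :
    (i, j) ∈ μ.cells \ ν.cells ↔ ν.rowLen i ≤ j ∧ j < μ.rowLen i := by
  rw [Finset.mem_sdiff, mem_cells, mem_cells, mem_iff_lt_rowLen, mem_iff_lt_rowLen, not_lt]
  have := rowLen_mono h i
  omega

theorem card_sdiff_cells_eq_sum (h : ν ≤ μ) {I : Finset ℕ}
    (hI : ∀ i ∉ I, ν.rowLen i = μ.rowLen i) :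
    ((μ.cells \ ν.cells).card : ℤ) = ∑ i ∈ I, (μ.beta i - ν.beta i) := by
  classical
  rw [Finset.card_eq_sum_card_fiberwise (f := Prod.fst) (t := I)]
  · push_cast
    refine Finset.sum_congr rfl fun i _ => ?_
    have hfiber : {p ∈ μ.cells \ ν.cells | p.1 = i} = μ.row i \ ν.row i := by
      ext ⟨a, b⟩
      simp only [Finset.mem_filter, Finset.mem_sdiff, mem_row_iff, mem_cells]
      tauto
    have hrow : ν.row i ⊆ μ.row i := fun p hp =>
      mem_row_iff.mpr ⟨h (mem_row_iff.mp hp).1, (mem_row_iff.mp hp).2⟩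
    rw [hfiber, Finset.card_sdiff_of_subset hrow, ← rowLen_eq_card, ← rowLen_eq_card,
      Nat.cast_sub (rowLen_mono h i)]
    unfold beta; ring
  · rintro ⟨i, j⟩ hij
    by_contra hi
    have := (mk_mem_sdiff_cells_iff h).mp hij
    rw [hI i hi] at this
    omega

/-- The diagram `ν` is `μ` with a rim hook occupying rows `r, …, R` removed. On β-numbers:
the beads `μ.beta r > ⋯ > μ.beta R` are replaced by `μ.beta (r+1) > ⋯ > μ.beta R > ν.beta R`. -/
structure IsRimHookShape (μ ν : YoungDiagram) (r R : ℕ) : Prop where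
  rows_le : r ≤ R
  beta_eq_of_lt_or_lt : ∀ i, i < r ∨ R < i → ν.beta i = μ.beta i
  beta_eq_succ : ∀ i, r ≤ i → i < R → ν.beta i = μ.beta (i + 1)
  beta_last_lt : ν.beta R < μ.beta R

namespace IsRimHookShape

variable {r R : ℕ} (h : IsRimHookShape μ ν r R)
include h

theorem beta_le (i : ℕ) : ν.beta i ≤ μ.beta i := by
  rcases lt_or_ge i r with hi | hi
  · exact (h.beta_eq_of_lt_or_lt i (Or.inl hi)).le
  rcases lt_trichotomy i R with hiR | rfl | hiR
  · rw [h.beta_eq_succ i hi hiR]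
    exact (μ.beta_strictAnti (Nat.lt_add_one i)).le
  · exact h.beta_last_lt.le
  · exact (h.beta_eq_of_lt_or_lt i (Or.inr hiR)).le

theorem subdiagram : ν ≤ μ :=
  le_of_forall_rowLen_le fun i => by have := h.beta_le i; unfold beta at this; omega

theorem rowLen_lt {i : ℕ} (h₁ : r ≤ i) (h₂ : i ≤ R) : ν.rowLen i < μ.rowLen i := by
  suffices ν.beta i < μ.beta i by unfold beta at this; omega
  rcases h₂.lt_or_eq with h₂ | rfl
  · rw [h.beta_eq_succ i h₁ h₂]
    exact μ.beta_strictAnti (Nat.lt_add_one i)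
  · exact h.beta_last_lt

theorem mem_Icc_of_mem_sdiff {i j : ℕ} (hij : (i, j) ∈ μ.cells \ ν.cells) : r ≤ i ∧ i ≤ R := by
  rw [mk_mem_sdiff_cells_iff h.subdiagram] at hij
  by_contra hi
  have := h.beta_eq_of_lt_or_lt i (by omega)
  unfold beta at this
  omega

theorem mem_sdiff_rowLen {i : ℕ} (h₁ : r ≤ i) (h₂ : i ≤ R) :
    (i, ν.rowLen i) ∈ μ.cells \ ν.cells :=
  (mk_mem_sdiff_cells_iff h.subdiagram).mpr ⟨le_rfl, h.rowLen_lt h₁ h₂⟩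

theorem card_sdiff : ((μ.cells \ ν.cells).card : ℤ) = μ.beta r - ν.beta R := by
  have hrows : ∀ i ∉ Finset.Ico r (R + 1), ν.rowLen i = μ.rowLen i := fun i hi => by
    have := h.beta_eq_of_lt_or_lt i (by rw [Finset.mem_Ico] at hi; omega)
    unfold beta at this
    omega
  have htelescope : ∑ i ∈ Finset.Ico r R, (μ.beta i - ν.beta i) = μ.beta r - μ.beta R := by
    rw [← neg_sub (μ.beta R), ← Finset.sum_Ico_sub μ.beta h.rows_le, ← Finset.sum_neg_distrib]
    refine Finset.sum_congr rfl fun i hi => ?_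
    rw [h.beta_eq_succ i (Finset.mem_Ico.mp hi).1 (Finset.mem_Ico.mp hi).2, neg_sub]
  rw [card_sdiff_cells_eq_sum h.subdiagram hrows, Finset.sum_Ico_succ_top h.rows_le, htelescope]
  ring

theorem beta_last_notMem_beads : ν.beta R ∉ μ.beads := by
  refine μ.beta_strictAnti.notMem_range_of_lt_of_lt ?_ h.beta_last_lt
  rw [← h.beta_eq_of_lt_or_lt (R + 1) (Or.inr (Nat.lt_add_one R))]
  exact ν.beta_strictAnti (Nat.lt_add_one R)

theorem beads_eq : ν.beads = moveBead μ.beads (μ.beta r) (ν.beta R) := by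
  ext x
  rw [mem_moveBead]
  constructor
  · rintro ⟨i, rfl⟩
    rcases lt_or_ge i r with hi | hi
    · rw [h.beta_eq_of_lt_or_lt i (Or.inl hi)]
      exact Or.inr ⟨⟨i, rfl⟩, (μ.beta_strictAnti hi).ne'⟩
    rcases lt_trichotomy i R with hiR | rfl | hiR
    · rw [h.beta_eq_succ i hi hiR]
      exact Or.inr ⟨⟨i + 1, rfl⟩, (μ.beta_strictAnti (by omega)).ne⟩
    · exact Or.inl rfl
    · rw [h.beta_eq_of_lt_or_lt i (Or.inr hiR)]
      exact Or.inr ⟨⟨i, rfl⟩, (μ.beta_strictAnti (by have := h.rows_le; omega)).ne⟩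
  · rintro (rfl | ⟨⟨j, rfl⟩, hj⟩)
    · exact ⟨R, rfl⟩
    have hjr : j ≠ r := by rintro rfl; exact hj rfl
    rcases lt_or_gt_of_ne hjr with hjr | hjr
    · exact ⟨j, h.beta_eq_of_lt_or_lt j (Or.inl hjr)⟩
    rcases le_or_gt j R with hjR | hjR
    · refine ⟨j - 1, ?_⟩
      rw [h.beta_eq_succ (j - 1) (by omega) (by omega), Nat.sub_add_cancel (by omega)]
    · exact ⟨j, h.beta_eq_of_lt_or_lt j (Or.inr hjR)⟩

theorem eq_iff_forall_notMem_Ioo :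
    r = R ↔ ∀ w ∈ Set.Ioo (ν.beta R) (μ.beta r), w ∉ μ.beads := by
  constructor
  · rintro rfl w hw
    refine μ.beta_strictAnti.notMem_range_of_lt_of_lt ?_ hw.2
    rw [← h.beta_eq_of_lt_or_lt (r + 1) (Or.inr (Nat.lt_add_one r))]
    exact (ν.beta_strictAnti (Nat.lt_add_one r)).trans hw.1
  · intro hall
    by_contra hne
    have hrR := lt_of_le_of_ne h.rows_le hne
    refine hall (μ.beta (r + 1)) ⟨?_, μ.beta_strictAnti (Nat.lt_add_one r)⟩ ⟨r + 1, rfl⟩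
    exact h.beta_last_lt.trans_le (μ.beta_strictAnti.antitone hrR)

theorem horizontalCells_iff_eq : HorizontalCells (μ.cells \ ν.cells) ↔ r = R := by
  constructor
  · intro hhor
    exact hhor _ (h.mem_sdiff_rowLen le_rfl h.rows_le) _ (h.mem_sdiff_rowLen h.rows_le le_rfl)
  · rintro rfl ⟨i, j⟩ hij ⟨i', j'⟩ hij'
    have := h.mem_Icc_of_mem_sdiff hij
    have := h.mem_Icc_of_mem_sdiff hij'
    dsimp only
    omega

theorem rowLen_add_one {i : ℕ} (h₁ : r ≤ i) (h₂ : i < R) : ν.rowLen i + 1 = μ.rowLen (i + 1) := by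
  have := h.beta_eq_succ i h₁ h₂
  unfold beta at this
  omega

theorem connectedCells : ConnectedCells (μ.cells \ ν.cells) := by
  have hsub {i j : ℕ} := mk_mem_sdiff_cells_iff h.subdiagram (i := i) (j := j)
  have hrow : ∀ i j, (i, j) ∈ μ.cells \ ν.cells →
      Relation.ReflTransGen (AdjIn (μ.cells \ ν.cells)) (i, j) (i, ν.rowLen i) := fun i j hij =>
    AdjIn.reflTransGen_of_row j (hsub.mp hij).1 fun j' h₁ h₂ =>
      hsub.mpr ⟨h₁, h₂.trans_lt (hsub.mp hij).2⟩
  -- walk down the left ends of the rows of the hook, from row `R - d` to row `R`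
  have hdown : ∀ d ≤ R - r, Relation.ReflTransGen (AdjIn (μ.cells \ ν.cells))
      (R - d, ν.rowLen (R - d)) (R, ν.rowLen R) := by
    intro d
    induction d with
    | zero => exact fun _ => .refl
    | succ d ih =>
      intro hd
      have h₁ : r ≤ R - (d + 1) := by omega
      have h₂ : R - (d + 1) < R := by omega
      have hnext : R - (d + 1) + 1 = R - d := by omega
      have hstep := h.rowLen_add_one h₁ h₂
      rw [hnext] at hstep
      have hbelow : (R - d, ν.rowLen (R - (d + 1))) ∈ μ.cells \ ν.cells :=
        hsub.mpr ⟨ν.rowLen_anti _ _ (by omega), by omega⟩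
      refine .head ⟨h.mem_sdiff_rowLen h₁ h₂.le, hbelow, Or.inr ⟨rfl, Or.inr hnext.symm⟩⟩ ?_
      exact (hrow _ _ hbelow).trans (ih (by omega))
  refine AdjIn.connectedCells_of_forall_reflTransGen (R, ν.rowLen R) fun ⟨i, j⟩ hij => ?_
  have hi := h.mem_Icc_of_mem_sdiff hij
  have := hdown (R - i) (by omega)
  rw [show R - (R - i) = i by omega] at this
  exact (hrow i j hij).trans this

theorem no2x2 : No2x2 (μ.cells \ ν.cells) := by
  rintro ⟨a, b, hab, -, -, hab'⟩
  have hsub {i j : ℕ} := mk_mem_sdiff_cells_iff h.subdiagram (i := i) (j := j)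
  have ha := h.mem_Icc_of_mem_sdiff hab
  have ha' := h.mem_Icc_of_mem_sdiff hab'
  have := h.rowLen_add_one ha.1 (by omega)
  have := hsub.mp hab
  have := hsub.mp hab'
  omega

end IsRimHookShape

theorem exists_isRimHookShape (hle : ν ≤ μ) (hne : (μ.cells \ ν.cells).Nonempty)
    (hconn : ConnectedCells (μ.cells \ ν.cells)) (h2x2 : No2x2 (μ.cells \ ν.cells)) :
    ∃ r R, IsRimHookShape μ ν r R := by
  classical
  have hsub {i j : ℕ} := mk_mem_sdiff_cells_iff hle (i := i) (j := j)
  set T := (μ.cells \ ν.cells).image Prod.fst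
  have hT : T.Nonempty := hne.image _
  set r := T.min' hT
  set R := T.max' hT
  have hrows : ∀ i j, (i, j) ∈ μ.cells \ ν.cells → r ≤ i ∧ i ≤ R := fun i j hij =>
    ⟨T.min'_le i (Finset.mem_image_of_mem _ hij), T.le_max' i (Finset.mem_image_of_mem _ hij)⟩
  obtain ⟨pr, hpr, hpr₁⟩ := Finset.mem_image.mp (T.min'_mem hT)
  obtain ⟨pR, hpR, hpR₁⟩ := Finset.mem_image.mp (T.max'_mem hT)
  have hlt : ∀ i, r ≤ i → i ≤ R → ν.rowLen i < μ.rowLen i := fun i h₁ h₂ => by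
    obtain ⟨j, hj⟩ := AdjIn.exists_mem_row_of_reflTransGen hpr (hconn pr hpr pR hpR)
      (hpr₁.trans_le h₁) (h₂.trans hpR₁.ge)
    exact (hsub.mp hj).1.trans_lt (hsub.mp hj).2
  have hout : ∀ i, i < r ∨ R < i → ν.rowLen i = μ.rowLen i := fun i hi => by
    refine (rowLen_mono hle i).antisymm (not_lt.mp fun hi' => ?_)
    have := hrows i _ (hsub.mpr ⟨le_rfl, hi'⟩)
    omega
  have hmid : ∀ i, r ≤ i → i < R → ν.rowLen i + 1 = μ.rowLen (i + 1) := fun i h₁ h₂ => by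
    obtain ⟨j, hj, hj'⟩ := AdjIn.exists_vertical_of_reflTransGen (i := i)
      (hconn _ (hsub.mpr ⟨le_rfl, hlt i h₁ h₂.le⟩) _ (hsub.mpr ⟨le_rfl, hlt (i + 1) (by omega) h₂⟩))
      le_rfl (Nat.lt_add_one i)
    rw [hsub] at hj hj'
    have := ν.rowLen_anti i (i + 1) (Nat.le_add_right i 1)
    have := μ.rowLen_anti i (i + 1) (Nat.le_add_right i 1)
    refine le_antisymm (by omega) (not_lt.mp fun hwide => h2x2 ⟨i, ν.rowLen i, ?_⟩)
    simp only [hsub]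
    omega
  refine ⟨r, R, ⟨T.min'_le _ (T.max'_mem hT), fun i hi => ?_, fun i h₁ h₂ => ?_, ?_⟩⟩
  · unfold beta; rw [hout i hi]
  · have := hmid i h₁ h₂; unfold beta; push_cast; omega
  · have := hlt R (T.min'_le _ (T.max'_mem hT)) le_rfl; unfold beta; omega

theorem exists_beta_eq (μ : YoungDiagram) {b : ℕ → ℤ} (hb : StrictAnti b)
    (hle : ∀ i, b i ≤ μ.beta i) (hge : ∀ i : ℕ, -(i : ℤ) ≤ b i) :
    ∃ ν : YoungDiagram, ν.beta = b := by
  classical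
  let ν : YoungDiagram :=
    { cells := μ.cells.filter fun p => (p.2 : ℤ) < b p.1 + p.1
      isLowerSet := fun p q hqp hp => by
        simp only [Finset.coe_filter, Set.mem_ofPred_eq] at hp ⊢
        have : b p.1 + p.1 ≤ b q.1 + q.1 := hb.antitone_add_natCast hqp.1
        have : q.2 ≤ p.2 := hqp.2
        exact ⟨μ.isLowerSet hqp hp.1, by omega⟩ }
  refine ⟨ν, funext fun i => ?_⟩
  have hrow : ν.rowLen i = (b i + i).toNat := rowLen_eq_of_forall_mem_iff fun j => by
    have := hle i
    rw [← mem_cells, Finset.mem_filter, mem_cells, mem_iff_lt_rowLen]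
    dsimp only
    unfold beta at this
    omega
  have := hge i
  unfold beta
  omega

theorem exists_isRimHookShape_of_notMem_beads (hl : 0 < l) (r : ℕ)
    (hgap : μ.beta r - l ∉ μ.beads) :
    ∃ ν R, IsRimHookShape μ ν r R ∧ ν.beta R = μ.beta r - l := by
  classical
  -- `R` is the last row whose bead lies above the target `μ.beta r - l`
  obtain ⟨R, hR₁, hR₂⟩ := μ.beta_strictAnti.exists_lt_lt_of_notMem_range hgap
    (by have := μ.beta_strictAnti.antitone (Nat.zero_le r); omega)
  have hrR : r ≤ R := not_lt.mp fun h => by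
    have := μ.beta_strictAnti.antitone (show R + 1 ≤ r from h); omega
  have hRpos : 1 ≤ μ.rowLen R := by unfold beta at hR₁ hR₂; omega
  let b : ℕ → ℤ := fun i =>
    if r ≤ i ∧ i < R then μ.beta (i + 1) else if i = R then μ.beta r - l else μ.beta i
  have hb : StrictAnti b := strictAnti_nat_of_succ_lt fun i => by
    have := μ.beta_strictAnti (Nat.lt_add_one i)
    have := μ.beta_strictAnti (Nat.lt_add_one (i + 1))
    simp only [b]
    rcases lt_trichotomy (i + 1) R with hiR | rfl | hiR
    · rcases eq_or_ne r (i + 1) with rfl | hr <;> split_ifs <;> omega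
    · rcases eq_or_ne r (i + 1) with rfl | hr <;> split_ifs <;> omega
    · rcases (show R ≤ i by omega).eq_or_lt with rfl | hiR' <;> split_ifs <;> omega
  obtain ⟨ν, hν⟩ := μ.exists_beta_eq hb (fun i => by
      have := μ.beta_strictAnti (Nat.lt_add_one i)
      simp only [b]
      split_ifs with h₁ h₂
      · exact this.le
      · subst h₂; exact hR₂.le
      · exact le_rfl)
    (fun i => by
      simp only [b]
      split_ifs with h₁ h₂
      · have := μ.rowLen_anti (i + 1) R (by omega); unfold beta; omega
      · subst h₂; have := μ.neg_le_beta (i + 1); push_cast at this; omega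
      · exact μ.neg_le_beta i)
  refine ⟨ν, R, ⟨hrR, fun i hi => ?_, fun i h₁ h₂ => ?_, ?_⟩, ?_⟩
  · rw [hν]; simp only [b]; rw [if_neg (by omega), if_neg (by omega)]
  · rw [hν]; simp only [b]; rw [if_pos ⟨h₁, h₂⟩]
  · simpa [hν, b] using hR₂
  · simp [hν, b]

end YoungDiagram

open YoungDiagram

namespace IsRemovableRimHook

variable {l : ℕ} {μ ν : YoungDiagram} {s : Finset (ℕ × ℕ)}

theorem card_lt (hl : 0 < l) (h : IsRemovableRimHook l μ s) (hν : ν.cells = μ.cells \ s) :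
    ν.cells.card < μ.cells.card := by
  obtain ⟨ν', -, rfl, hcard, -⟩ := h
  rw [hν]
  exact Finset.card_lt_card
    (Finset.sdiff_ssubset Finset.sdiff_subset (Finset.card_pos.mp (by omega)))

theorem exists_moveBead (hl : 0 < l) (h : IsRemovableRimHook l μ s) :
    ∃ t ∈ μ.beads, t - l ∉ μ.beads ∧
      (HorizontalCells s ↔ ∀ w ∈ Set.Ioo (t - l) t, w ∉ μ.beads) ∧
      ∀ ν : YoungDiagram, ν.cells = μ.cells \ s → ν.beads = moveBead μ.beads t (t - l) := by
  obtain ⟨ν, hsub, rfl, hcard, hconn, h2x2⟩ := h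
  obtain ⟨r, R, hshape⟩ := exists_isRimHookShape (cells_subset_iff.mp hsub)
    (Finset.card_pos.mp (by omega)) hconn h2x2
  have hbeta : ν.beta R = μ.beta r - l := by have := hshape.card_sdiff; omega
  refine ⟨μ.beta r, ⟨r, rfl⟩, hbeta ▸ hshape.beta_last_notMem_beads, ?_, fun ν' hν' => ?_⟩
  · rw [hshape.horizontalCells_iff_eq, hshape.eq_iff_forall_notMem_Ioo, hbeta]
  · obtain rfl : ν' = ν := YoungDiagram.ext (by rw [hν', Finset.sdiff_sdiff_eq_self hsub])
    rw [hshape.beads_eq, hbeta]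

end IsRemovableRimHook

theorem exists_isRemovableRimHook_of_notMem_beads {l : ℕ} (hl : 0 < l) {μ : YoungDiagram} {t : ℤ}
    (ht : t ∈ μ.beads) (htl : t - l ∉ μ.beads) :
    ∃ s, IsRemovableRimHook l μ s ∧ (HorizontalCells s ↔ ∀ w ∈ Set.Ioo (t - l) t, w ∉ μ.beads) ∧
      ∃ ν : YoungDiagram, ν.cells = μ.cells \ s ∧ ν.beads = moveBead μ.beads t (t - l) := by
  obtain ⟨r, rfl⟩ := ht
  obtain ⟨ν, R, hshape, hbeta⟩ := exists_isRimHookShape_of_notMem_beads hl r htl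
  have hsub := cells_subset_iff.mpr hshape.subdiagram
  refine ⟨μ.cells \ ν.cells, ⟨ν, hsub, rfl, by have := hshape.card_sdiff; omega,
    hshape.connectedCells, hshape.no2x2⟩, ?_, ν, (Finset.sdiff_sdiff_eq_self hsub).symm, ?_⟩
  · rw [hshape.horizontalCells_iff_eq, hshape.eq_iff_forall_notMem_Ioo, hbeta]
  · rw [hshape.beads_eq, hbeta]

theorem abacusStar_of_reflTransGen {l : ℕ} (hl : 0 < l) {lam μ : YoungDiagram}
    (hstar : AbacusStar l lam.beads) (h : Relation.ReflTransGen (RemoveHorizHook l) lam μ) :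
    AbacusStar l μ.beads := by
  induction h with
  | refl => exact hstar
  | tail _ hstep ih =>
    obtain ⟨s, hs, -, hcells⟩ := hstep
    obtain ⟨t, ht, htl, -, hbeads⟩ := hs.exists_moveBead hl
    rw [hbeads _ hcells]
    exact ih.moveBead ht htl

/-- An `ℓ`-regular partition is an `ℓ`-partition if and only if it satisfies
Carter's condition (⋆). -/
theorem stmt_6 (ℓ : ℕ) (hℓ : 2 ≤ ℓ) (lam : YoungDiagram) (hreg : Regular ℓ lam) :
    IsEllPartition ℓ lam ↔ StarCond ℓ lam := by
  have hl : 0 < ℓ := by omega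
  rw [starCond_iff_abacusStar]
  constructor
  · rintro ⟨-, hell⟩
    refine abacusStar_of_forall_moveBead (Relation.ReflTransGen (RemoveHorizHook ℓ) lam)
      (fun μ hμ t ht htl => ?_) .refl
    obtain ⟨s, hs, hhor, ν, hν, hbeads⟩ := exists_isRemovableRimHook_of_notMem_beads hl ht htl
    have hsh := hell μ hμ s hs
    exact ⟨hhor.mp hsh, ν, hμ.tail ⟨s, hs, hsh, hν⟩, hs.card_lt hl hν, hbeads⟩
  · intro hstar
    refine ⟨hreg, fun μ hμ s hs => ?_⟩
    obtain ⟨t, ht, htl, hhor, -⟩ := hs.exists_moveBead hl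
    exact hhor.mpr fun w hw => (abacusStar_of_reflTransGen hl hstar hμ).notMem_of_mem_Ioo ht htl hw
end
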